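/- arXiv:2502.19006 — 3 statements merged into one kernel-verified Lean document; each statement's English description precedes it below -/
import Mathlib

section
/- Monotonicity of the posterior variance against training inputs: let X_t = (x₁, …, x_t) be a finite sequence in X, let S ⊆ {1, …, t}, and let X_S = (x_i)_{i∈S} denote the corresponding subsequence. Then for every x ∈ X and every λ > 0, σ²_{λ²}(x; X_t) ≤ σ²_{λ²}(x; X_S); consequently σ(x; X_t) ≤ σ(x; X_S). -/
open Matrix

noncomputable section

/-- Gram matrix `K = [k(x_i, x_j)]` of the kernel `k` on the finite family `xs`. -/
def gram {X ι : Type*} [Fintype ι] (k : X → X → ℝ) (xs : ι → X) :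
    Matrix ι ι ℝ := fun i j => k (xs i) (xs j)

/-- Kernel vector `k_t(x) = (k(x₁, x), …, k(x_t, x))`. -/
def kvec {X ι : Type*} [Fintype ι] (k : X → X → ℝ) (xs : ι → X) (x : X) :
    ι → ℝ := fun i => k (xs i) x

/-- Regularized posterior variance `σ²_{λ²}(x; xs) = k(x,x) - k_t(x)ᵀ (K + λ² I)⁻¹ k_t(x)`.
For the empty family this is `k(x,x)`. -/
def postVar {X ι : Type*} [Fintype ι] [DecidableEq ι] (k : X → X → ℝ)
    (xs : ι → X) (lam : ℝ) (x : X) : ℝ :=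
  k x x - kvec k xs x ⬝ᵥ ((gram k xs + lam ^ 2 • (1 : Matrix ι ι ℝ))⁻¹ *ᵥ kvec k xs x)

/-- Noise-free posterior standard deviation `σ(x; xs) = inf_{λ > 0} σ_{λ²}(x; xs)`. -/
def postStd {X ι : Type*} [Fintype ι] [DecidableEq ι] (k : X → X → ℝ)
    (xs : ι → X) (x : X) : ℝ :=
  ⨅ lam : {l : ℝ // 0 < l}, Real.sqrt (postVar k xs lam.1 x)

/-- Maximum information gain `γ_T(λ²) = sup_{x₁,…,x_T} (1/2) ln det (I_T + λ⁻² K_T)`,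
a value in `[0, ∞]`. -/
def mig {X : Type*} (k : X → X → ℝ) (T : ℕ) (lam : ℝ) : ENNReal :=
  ⨆ xs : Fin T → X, ENNReal.ofReal
    ((1 / 2) * Real.log ((1 + (lam ^ 2)⁻¹ • gram k xs).det))

/-- The prefix `X_{t-1} = (x₁, …, x_{t-1})` of a finite sequence (`t` is 0-indexed). -/
def pre {X : Type*} {T : ℕ} (xs : Fin T → X) (t : Fin T) : Fin t.1 → X :=
  fun i => xs ⟨i.1, i.2.trans t.2⟩

/-- Noise-free posterior mean `μ(x; xs) = k_t(x)ᵀ K⁻¹ (f(x₁), …, f(x_t))ᵀ`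
(for the empty family this is `0`). -/
def postMean {X ι : Type*} [Fintype ι] [DecidableEq ι] (k : X → X → ℝ)
    (xs : ι → X) (f : X → ℝ) (x : X) : ℝ :=
  kvec k xs x ⬝ᵥ ((gram k xs)⁻¹ *ᵥ fun i => f (xs i))

/-- Noise-free posterior standard deviation in closed form,
`σ(x; xs) = (k(x,x) - k_t(x)ᵀ K⁻¹ k_t(x))^{1/2}` (for the empty family, `k(x,x)^{1/2}`). -/
def postStdInv {X ι : Type*} [Fintype ι] [DecidableEq ι] (k : X → X → ℝ)
    (xs : ι → X) (x : X) : ℝ :=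
  Real.sqrt (k x x - kvec k xs x ⬝ᵥ ((gram k xs)⁻¹ *ᵥ kvec k xs x))

/-- The first `t` points `X_t = (x₁, …, x_t)` of an infinite sequence. -/
def prefN {X : Type*} (xseq : ℕ → X) (t : ℕ) : Fin t → X := fun i => xseq i

/-!
For a positive definite matrix `A`, the quadratic form `b ⬝ᵥ A⁻¹ *ᵥ b` is the maximum of
`2 (c ⬝ᵥ b) - c ⬝ᵥ A *ᵥ c` over all `c`. The regularized Gram matrix of a subfamily is a
principal submatrix of that of the whole family, and extending a competitor `c` of the subfamily
by zero gives a competitor of the whole family with the same value. Hence the maximum can only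
grow with the family, i.e. the posterior variance can only shrink; taking square roots and the
infimum over `λ` transfers this to the noise-free standard deviation.
-/

open Function

section ExtendByZero

variable {R ι κ : Type*} [CommSemiring R] [Fintype ι] [Fintype κ] {e : κ → ι}

lemma extend_zero_dotProduct (he : Injective e) (c : κ → R) (v : ι → R) :
    extend e c 0 ⬝ᵥ v = c ⬝ᵥ (v ∘ e) := by
  classical
  have hzero : ∀ i ∉ Finset.univ.map ⟨e, he⟩, extend e c 0 i * v i = 0 := by
    intro i hi
    rw [extend_apply' _ _ _ fun ⟨j, hj⟩ => hi (by simp [← hj]), Pi.zero_apply, zero_mul]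
  rw [dotProduct, ← Finset.sum_subset (Finset.subset_univ _) fun i _ hi => hzero i hi,
    Finset.sum_map]
  simp [dotProduct, he.extend_apply]

lemma extend_zero_dotProduct_mulVec (he : Injective e) (A : Matrix ι ι R) (c : κ → R) :
    extend e c 0 ⬝ᵥ A *ᵥ extend e c 0 = c ⬝ᵥ A.submatrix e e *ᵥ c := by
  rw [extend_zero_dotProduct he]
  congr 1
  ext j
  rw [Function.comp_apply, mulVec, dotProduct_comm, extend_zero_dotProduct he, dotProduct_comm]
  rfl

end ExtendByZero

namespace Matrix.PosDef

variable {ι κ : Type*} [Fintype ι] [DecidableEq ι] [Fintype κ] [DecidableEq κ]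
  {A : Matrix ι ι ℝ}

lemma two_mul_dotProduct_sub_le (hA : A.PosDef) (b c : ι → ℝ) :
    2 * (c ⬝ᵥ b) - c ⬝ᵥ A *ᵥ c ≤ b ⬝ᵥ A⁻¹ *ᵥ b := by
  set m := A⁻¹ *ᵥ b
  have hAm : A *ᵥ m = b := by
    rw [mulVec_mulVec, mul_nonsing_inv A ((isUnit_iff_isUnit_det A).1 hA.isUnit), one_mulVec]
  have hcross : m ⬝ᵥ A *ᵥ c = b ⬝ᵥ c := by
    rw [dotProduct_mulVec, ← mulVec_transpose, ← conjTranspose_eq_transpose_of_trivial,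
      hA.isHermitian.eq, hAm]
  have hsq := hA.posSemidef.dotProduct_mulVec_nonneg (c - m)
  simp only [star_trivial, mulVec_sub, dotProduct_sub, sub_dotProduct, hAm, hcross] at hsq
  linarith [dotProduct_comm c b, dotProduct_comm m b]

lemma dotProduct_inv_mulVec_eq_two_mul_sub (hA : A.PosDef) (b : ι → ℝ) :
    b ⬝ᵥ A⁻¹ *ᵥ b = 2 * (A⁻¹ *ᵥ b ⬝ᵥ b) - A⁻¹ *ᵥ b ⬝ᵥ A *ᵥ (A⁻¹ *ᵥ b) := by
  rw [mulVec_mulVec, mul_nonsing_inv A ((isUnit_iff_isUnit_det A).1 hA.isUnit), one_mulVec,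
    dotProduct_comm b]
  ring

lemma dotProduct_inv_submatrix_le (hA : A.PosDef) {e : κ → ι} (he : Injective e)
    (b : ι → ℝ) : (b ∘ e) ⬝ᵥ (A.submatrix e e)⁻¹ *ᵥ (b ∘ e) ≤ b ⬝ᵥ A⁻¹ *ᵥ b := by
  set c := (A.submatrix e e)⁻¹ *ᵥ (b ∘ e)
  calc (b ∘ e) ⬝ᵥ (A.submatrix e e)⁻¹ *ᵥ (b ∘ e)
      = 2 * (c ⬝ᵥ (b ∘ e)) - c ⬝ᵥ A.submatrix e e *ᵥ c :=
        (hA.submatrix he).dotProduct_inv_mulVec_eq_two_mul_sub _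
    _ = 2 * (extend e c 0 ⬝ᵥ b) - extend e c 0 ⬝ᵥ A *ᵥ extend e c 0 := by
        rw [extend_zero_dotProduct he, extend_zero_dotProduct_mulVec he]
    _ ≤ b ⬝ᵥ A⁻¹ *ᵥ b := hA.two_mul_dotProduct_sub_le b _

end Matrix.PosDef

section PosteriorVariance

variable {X ι κ : Type*} [Fintype ι] {k : X → X → ℝ}

lemma gram_posSemidef (hsym : ∀ x y : X, k x y = k y x)
    (hpsd : ∀ (n : ℕ) (xv : Fin n → X) (c : Fin n → ℝ),
      0 ≤ ∑ i, ∑ j, c i * c j * k (xv i) (xv j))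
    (xs : ι → X) : (gram k xs).PosSemidef := by
  refine posSemidef_iff_dotProduct_mulVec.2 ⟨?_, fun c => ?_⟩
  · ext i j
    simp [_root_.gram, hsym (xs i)]
  · have hquad : star c ⬝ᵥ gram k xs *ᵥ c = ∑ i, ∑ j, c i * c j * k (xs i) (xs j) := by
      simp only [dotProduct, mulVec, _root_.gram, star_trivial, Finset.mul_sum]
      exact Finset.sum_congr rfl fun i _ => Finset.sum_congr rfl fun j _ => by ring
    let e := (Fintype.equivFin ι).symm
    rw [hquad, ← e.sum_comp]
    simp_rw [← e.sum_comp (fun j => _ * c j * _)]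
    exact hpsd _ (xs ∘ e) (c ∘ e)

variable [DecidableEq ι] [Fintype κ] [DecidableEq κ]

lemma postVar_le_postVar_comp (hsym : ∀ x y : X, k x y = k y x)
    (hpsd : ∀ (n : ℕ) (xv : Fin n → X) (c : Fin n → ℝ),
      0 ≤ ∑ i, ∑ j, c i * c j * k (xv i) (xv j))
    (xs : ι → X) {e : κ → ι} (he : Injective e) {lam : ℝ} (hlam : lam ≠ 0) (x : X) :
    postVar k xs lam x ≤ postVar k (xs ∘ e) lam x := by
  have hA : (gram k xs + lam ^ 2 • (1 : Matrix ι ι ℝ)).PosDef :=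
    PosDef.posSemidef_add (gram_posSemidef hsym hpsd xs) (PosDef.one.smul (by positivity))
  have hsub : gram k (xs ∘ e) + lam ^ 2 • (1 : Matrix κ κ ℝ)
      = (gram k xs + lam ^ 2 • (1 : Matrix ι ι ℝ)).submatrix e e := by
    ext i j
    simp [_root_.gram, one_apply, he.eq_iff]
  rw [postVar, postVar, hsub]
  exact sub_le_sub_left (hA.dotProduct_inv_submatrix_le he (kvec k xs x)) _

lemma postStd_mono {xs : ι → X} {ys : κ → X} {x : X}
    (h : ∀ lam : ℝ, 0 < lam → postVar k xs lam x ≤ postVar k ys lam x) :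
    postStd k xs x ≤ postStd k ys x := by
  have : Nonempty {l : ℝ // 0 < l} := ⟨⟨1, one_pos⟩⟩
  exact ciInf_mono ⟨0, by rintro _ ⟨l, rfl⟩; exact Real.sqrt_nonneg _⟩
    fun l => Real.sqrt_le_sqrt (h l.1 l.2)

end PosteriorVariance

theorem postVar_monotone_in_inputs_general
    {X : Type*} (k : X → X → ℝ)
    (hsym : ∀ x y : X, k x y = k y x)
    (hpsd : ∀ (n : ℕ) (xv : Fin n → X) (c : Fin n → ℝ),
      0 ≤ ∑ i, ∑ j, c i * c j * k (xv i) (xv j))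
    (t : ℕ) (xs : Fin t → X) (S : Finset (Fin t)) (x : X) :
    (∀ lam : ℝ, 0 < lam →
        postVar k xs lam x ≤ postVar k (fun i : {i : Fin t // i ∈ S} => xs i.1) lam x) ∧
      postStd k xs x ≤ postStd k (fun i : {i : Fin t // i ∈ S} => xs i.1) x := by
  have hVar : ∀ lam : ℝ, 0 < lam →
      postVar k xs lam x ≤ postVar k (fun i : {i : Fin t // i ∈ S} => xs i.1) lam x :=
    fun _ hlam => postVar_le_postVar_comp hsym hpsd xs Subtype.val_injective hlam.ne' x
  exact ⟨hVar, postStd_mono hVar⟩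

/-- Monotonicity of the posterior variance against training inputs. -/
theorem postVar_monotone_in_inputs
    {X : Type*} [Nonempty X] (k : X → X → ℝ)
    (hsym : ∀ x y : X, k x y = k y x)
    (hpsd : ∀ (n : ℕ) (xv : Fin n → X) (c : Fin n → ℝ),
      0 ≤ ∑ i, ∑ j, c i * c j * k (xv i) (xv j))
    (t : ℕ) (xs : Fin t → X) (S : Finset (Fin t)) (x : X) :
    (∀ lam : ℝ, 0 < lam →
        postVar k xs lam x ≤ postVar k (fun i : {i : Fin t // i ∈ S} => xs i.1) lam x) ∧
      postStd k xs x ≤ postStd k (fun i : {i : Fin t // i ∈ S} => xs i.1) x :=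
  postVar_monotone_in_inputs_general k hsym hpsd t xs S x
end
end

section
/- Cumulative regret bound for GP-UCB via posterior standard deviations: let f belong to the pre-RKHS of k with ‖f‖_k ≤ B for some B > 0, and let x* ∈ X satisfy f(x*) = sup_{x ∈ X} f(x). If the sequence (x_t)_{t≥1} follows the GP-UCB rule with parameter B, then for every T ∈ ℕ₊, ∑_{t=1}^T (f(x*) − f(x_t)) ≤ 2B ∑_{t=1}^T σ(x_t; X_{t−1}). -/
open Matrix

noncomputable section

/-! `f(x) - μ(x; X_t)` is the RKHS inner product of `f` with the residual
`k(x, ·) - ∑ⱼ αⱼ k(xⱼ, ·)`, `α = K_t⁻¹ k_t(x)`, of the projection of `k(x, ·)` onto the span of the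
data, and the squared norm of that residual is `σ(x; X_t)²`. Cauchy–Schwarz thus gives
`|f - μ| ≤ ‖f‖_k σ ≤ B σ` everywhere, and combining this confidence bound at `x*` and at `x_t` with
the UCB choice of `x_t` bounds the instantaneous regret `f(x*) - f(x_t)` by `2 B σ(x_t; X_{t-1})`. -/

namespace Matrix

variable {n : Type*} [Fintype n]

theorem IsSymm.mulVec_dotProduct {R : Type*} [CommSemiring R] {A : Matrix n n R}
    (hA : A.IsSymm) (u v : n → R) : (A *ᵥ u) ⬝ᵥ v = u ⬝ᵥ A *ᵥ v := by
  rw [dotProduct_comm, dotProduct_mulVec, ← hA.eq, vecMul_transpose, hA.eq, dotProduct_comm]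

theorem nonsing_inv_mul_mul_nonsing_inv {R : Type*} [CommRing R] [DecidableEq n]
    (A : Matrix n n R) : A⁻¹ * A * A⁻¹ = A⁻¹ := by
  rcases nonsing_inv_cancel_or_zero A with ⟨h, -⟩ | h <;> simp [h]

theorem IsSymm.inv_mulVec_dotProduct_mulVec_inv_mulVec {R : Type*} [CommRing R] [DecidableEq n]
    {A : Matrix n n R} (hA : A.IsSymm) (v : n → R) :
    (A⁻¹ *ᵥ v) ⬝ᵥ A *ᵥ A⁻¹ *ᵥ v = v ⬝ᵥ A⁻¹ *ᵥ v := by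
  rw [hA.inv.mulVec_dotProduct, mulVec_mulVec, mulVec_mulVec, nonsing_inv_mul_mul_nonsing_inv]

theorem PosSemidef.dotProduct_mulVec_sq_le {M : Matrix n n ℝ} (hM : M.PosSemidef) (a b : n → ℝ) :
    (a ⬝ᵥ M *ᵥ b) ^ 2 ≤ (a ⬝ᵥ M *ᵥ a) * (b ⬝ᵥ M *ᵥ b) := by
  classical
  have hsymm : M.IsSymm := by simpa using hM.isHermitian
  have h := (toBilin' M).apply_mul_apply_le_of_forall_zero_le
    (fun v => by simpa [toBilin'_apply'] using hM.dotProduct_mulVec_nonneg v) a b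
  simp only [toBilin'_apply'] at h
  rwa [dotProduct_comm b, hsymm.mulVec_dotProduct, ← sq] at h

end Matrix

section Kernel

variable {X : Type*} {k : X → X → ℝ}

/-- `kernelInner k p a q b` is the RKHS inner product `⟪∑ᵢ aᵢ k(pᵢ, ·), ∑ⱼ bⱼ k(qⱼ, ·)⟫_k`. -/
def kernelInner {ι κ : Type*} [Fintype ι] [Fintype κ] (k : X → X → ℝ)
    (p : ι → X) (a : ι → ℝ) (q : κ → X) (b : κ → ℝ) : ℝ :=
  ∑ i, ∑ j, a i * b j * k (p i) (q j)

theorem kernelInner_eq_dotProduct_gram {ι : Type*} [Fintype ι] (p : ι → X) (a b : ι → ℝ) :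
    kernelInner k p a p b = a ⬝ᵥ gram k p *ᵥ b := by
  simp only [kernelInner, dotProduct, mulVec, _root_.gram, Finset.mul_sum]
  exact Finset.sum_congr rfl fun i _ => Finset.sum_congr rfl fun j _ => by ring

theorem isSymm_gram (hsym : ∀ x y : X, k x y = k y x) {ι : Type*} [Fintype ι] (p : ι → X) :
    (gram k p).IsSymm :=
  IsSymm.ext fun _ _ => hsym _ _

theorem posSemidef_gram (hsym : ∀ x y : X, k x y = k y x)
    (hpsd : ∀ (n : ℕ) (xv : Fin n → X) (c : Fin n → ℝ),
      0 ≤ ∑ i, ∑ j, c i * c j * k (xv i) (xv j))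
    {ι : Type*} [Fintype ι] (p : ι → X) : (gram k p).PosSemidef := by
  refine .of_dotProduct_mulVec_nonneg (isSymm_gram hsym p) fun a => ?_
  let e := Fintype.equivFin ι
  rw [star_trivial, ← kernelInner_eq_dotProduct_gram, kernelInner,
    ← Fintype.sum_equiv e.symm _ _ fun i => Fintype.sum_equiv e.symm _ _ fun j => rfl]
  exact hpsd _ (p ∘ e.symm) (a ∘ e.symm)

theorem kernelInner_self_nonneg (hsym : ∀ x y : X, k x y = k y x)
    (hpsd : ∀ (n : ℕ) (xv : Fin n → X) (c : Fin n → ℝ),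
      0 ≤ ∑ i, ∑ j, c i * c j * k (xv i) (xv j))
    {ι : Type*} [Fintype ι] (p : ι → X) (a : ι → ℝ) : 0 ≤ kernelInner k p a p a := by
  simpa [kernelInner_eq_dotProduct_gram] using
    (posSemidef_gram hsym hpsd p).dotProduct_mulVec_nonneg a

theorem kernelInner_sq_le (hsym : ∀ x y : X, k x y = k y x)
    (hpsd : ∀ (n : ℕ) (xv : Fin n → X) (c : Fin n → ℝ),
      0 ≤ ∑ i, ∑ j, c i * c j * k (xv i) (xv j))
    {ι κ : Type*} [Fintype ι] [Fintype κ] (p : ι → X) (a : ι → ℝ) (q : κ → X) (b : κ → ℝ) :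
    kernelInner k p a q b ^ 2 ≤ kernelInner k p a p a * kernelInner k q b q b := by
  have h := (posSemidef_gram hsym hpsd (Sum.elim p q)).dotProduct_mulVec_sq_le
    (Sum.elim a 0) (Sum.elim 0 b)
  simpa [← kernelInner_eq_dotProduct_gram, kernelInner, Fintype.sum_sum_type] using h

theorem kernelInner_eq_dotProduct_of_eq_sum {ι κ : Type*} [Fintype ι] [Fintype κ] {f : X → ℝ}
    {xv : ι → X} {c : ι → ℝ} (hf : ∀ x, f x = ∑ i, c i * k (xv i) x) (q : κ → X) (b : κ → ℝ) :
    kernelInner k xv c q b = b ⬝ᵥ fun j => f (q j) := by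
  simp only [kernelInner, dotProduct, hf, Finset.mul_sum]
  rw [Finset.sum_comm]
  exact Finset.sum_congr rfl fun j _ => Finset.sum_congr rfl fun i _ => by ring

theorem kernelInner_residual_self (hsym : ∀ x y : X, k x y = k y x) {κ : Type*} [Fintype κ]
    (y : κ → X) (x : X) (β : κ → ℝ) :
    kernelInner k (Sum.elim (fun _ : Unit => x) y) (Sum.elim 1 (-β))
        (Sum.elim (fun _ : Unit => x) y) (Sum.elim 1 (-β)) =
      k x x - 2 * (β ⬝ᵥ kvec k y x) + kernelInner k y β y β := by
  simp only [kernelInner, Fintype.sum_sum_type, Sum.elim_inl, Sum.elim_inr, Pi.one_apply,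
    Pi.neg_apply, Finset.univ_unique, Finset.sum_singleton, dotProduct, kvec, hsym x,
    Finset.sum_add_distrib, neg_mul, mul_neg, Finset.sum_neg_distrib, one_mul, mul_one]
  ring

variable {κ : Type*} [Fintype κ] [DecidableEq κ]

theorem postMean_eq_dotProduct (hsym : ∀ x y : X, k x y = k y x) (y : κ → X) (f : X → ℝ)
    (x : X) : postMean k y f x = ((gram k y)⁻¹ *ᵥ kvec k y x) ⬝ᵥ fun i => f (y i) := by
  rw [postMean, (isSymm_gram hsym y).inv.mulVec_dotProduct]

theorem abs_sub_postMean_le (hsym : ∀ x y : X, k x y = k y x)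
    (hpsd : ∀ (n : ℕ) (xv : Fin n → X) (c : Fin n → ℝ),
      0 ≤ ∑ i, ∑ j, c i * c j * k (xv i) (xv j))
    {ι : Type*} [Fintype ι] {f : X → ℝ} {xv : ι → X} {c : ι → ℝ}
    (hf : ∀ x, f x = ∑ i, c i * k (xv i) x) (y : κ → X) (x : X) :
    |f x - postMean k y f x| ≤ √(kernelInner k xv c xv c) * postStdInv k y x := by
  set α := (gram k y)⁻¹ *ᵥ kvec k y x
  set q := Sum.elim (fun _ : Unit => x) y
  set w : Unit ⊕ κ → ℝ := Sum.elim 1 (-α)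
  have hcross : kernelInner k xv c q w = f x - postMean k y f x := by
    rw [kernelInner_eq_dotProduct_of_eq_sum hf, postMean_eq_dotProduct hsym]
    simp [q, w, α, dotProduct, Fintype.sum_sum_type, sub_eq_add_neg]
  have hresidual : kernelInner k q w q w = k x x - kvec k y x ⬝ᵥ α := by
    refine (kernelInner_residual_self hsym y x α).trans ?_
    rw [kernelInner_eq_dotProduct_gram,
      (isSymm_gram hsym y).inv_mulVec_dotProduct_mulVec_inv_mulVec, dotProduct_comm α]
    ring
  rw [← hcross, postStdInv, ← hresidual,
    ← Real.sqrt_mul (kernelInner_self_nonneg hsym hpsd xv c)]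
  exact Real.abs_le_sqrt (kernelInner_sq_le hsym hpsd _ _ _ _)

end Kernel

theorem sub_le_two_mul_of_ucb {X : Type*} {f μ σ : X → ℝ} {B : ℝ}
    (hconf : ∀ x, |f x - μ x| ≤ B * σ x) {x' x : X}
    (hucb : μ x' + B * σ x' ≤ μ x + B * σ x) : f x' - f x ≤ 2 * B * σ x := by
  have hx' := (abs_le.mp (hconf x')).2
  have hx := (abs_le.mp (hconf x)).1
  linarith

theorem gp_ucb_cumulative_regret_via_postStd_general
    {X : Type*} (k : X → X → ℝ)
    (hsym : ∀ x y : X, k x y = k y x)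
    (hpsd : ∀ (n : ℕ) (xv : Fin n → X) (c : Fin n → ℝ),
      0 ≤ ∑ i, ∑ j, c i * c j * k (xv i) (xv j))
    (f : X → ℝ) (n : ℕ) (c : Fin n → ℝ) (xv : Fin n → X)
    (hf : ∀ x : X, f x = ∑ i, c i * k (xv i) x)
    (B : ℝ)
    (hnorm : Real.sqrt (∑ i, ∑ j, c i * c j * k (xv i) (xv j)) ≤ B)
    (xstar : X)
    (xseq : ℕ → X)
    (hucb : ∀ (t : ℕ) (x : X),
      postMean k (prefN xseq t) f x + B * postStdInv k (prefN xseq t) x ≤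
        postMean k (prefN xseq t) f (xseq t) + B * postStdInv k (prefN xseq t) (xseq t)) :
    ∀ T : ℕ, 0 < T →
      ∑ t : Fin T, (f xstar - f (xseq t)) ≤
        2 * B * ∑ t : Fin T, postStdInv k (prefN xseq t.1) (xseq t.1) := by
  intro T _
  have hconf (t : ℕ) (x : X) :
      |f x - postMean k (prefN xseq t) f x| ≤ B * postStdInv k (prefN xseq t) x :=
    (abs_sub_postMean_le hsym hpsd hf _ x).trans
      (mul_le_mul_of_nonneg_right hnorm (Real.sqrt_nonneg _))
  rw [Finset.mul_sum]
  exact Finset.sum_le_sum fun t _ => sub_le_two_mul_of_ucb (hconf t) (hucb t xstar)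

/-- Cumulative regret bound for GP-UCB via posterior standard deviations. -/
theorem gp_ucb_cumulative_regret_via_postStd
    {X : Type*} [Nonempty X] (k : X → X → ℝ)
    (hsym : ∀ x y : X, k x y = k y x)
    (hpsd : ∀ (n : ℕ) (xv : Fin n → X) (c : Fin n → ℝ),
      0 ≤ ∑ i, ∑ j, c i * c j * k (xv i) (xv j))
    (f : X → ℝ) (n : ℕ) (c : Fin n → ℝ) (xv : Fin n → X)
    (hf : ∀ x : X, f x = ∑ i, c i * k (xv i) x)
    (B : ℝ) (hB : 0 < B)
    (hnorm : Real.sqrt (∑ i, ∑ j, c i * c j * k (xv i) (xv j)) ≤ B)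
    (xstar : X) (hstar : ∀ x : X, f x ≤ f xstar)
    (xseq : ℕ → X)
    (hinv : ∀ t : ℕ, 1 ≤ t → IsUnit (gram k (prefN xseq t)).det)
    (hucb : ∀ (t : ℕ) (x : X),
      postMean k (prefN xseq t) f x + B * postStdInv k (prefN xseq t) x ≤
        postMean k (prefN xseq t) f (xseq t) + B * postStdInv k (prefN xseq t) (xseq t)) :
    ∀ T : ℕ, 0 < T →
      ∑ t : Fin T, (f xstar - f (xseq t)) ≤
        2 * B * ∑ t : Fin T, postStdInv k (prefN xseq t.1) (xseq t.1) :=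
  gp_ucb_cumulative_regret_via_postStd_general k hsym hpsd f n c xv hf B hnorm xstar xseq hucb
end
end

section
/- Minimum posterior standard deviation under an SE-type information-gain bound: assume k(x, x) ≤ 1 for all x ∈ X and that the SE-type information-gain hypothesis holds. Then for every integer T ≥ T̄_SE and every sequence x₁, …, x_T ∈ X, min_{t ∈ {1, …, T}} σ(x_t; X_{t−1}) ≤ √T · exp(−(1/2) C̃_SE T^{1/(d+1)}); moreover min_{t ∈ {1, …, T}} σ(x_t; X_{t−1}) ≤ 1 for every T ∈ ℕ₊. -/
open Matrix

noncomputable section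

/-! Bordering the regularized Gram matrix `K + λ² I` by one point multiplies its determinant by
the Schur complement `λ² + σ²_{λ²}(x; X)`. Hence
`ln det (I + λ⁻² K_T) = ∑_t ln (1 + λ⁻² σ²_{λ²}(x_t; X_{t-1})) ≤ 2 γ_T(λ²)`, so some summand is at
most `2 γ_T(λ²) / T`, i.e. `σ(x_t; X_{t-1}) ≤ λ √(exp (2 γ_T(λ²) / T) - 1)`. For `λ² = λ_T²` we have
`ln (T / λ²) = C̃ T^{1/(d+1)}`, so the SE hypothesis gives `γ_T(λ²) ≤ T / 6`, and `exp (1/3) - 1 ≤ 1`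
leaves `σ(x_t; X_{t-1}) ≤ λ_T`. The bound `1` comes from the first point, whose posterior is the
prior. -/

def IsPosSemidefKernel {X : Type*} (k : X → X → ℝ) : Prop :=
  (∀ x y, k x y = k y x) ∧
    ∀ (n : ℕ) (xv : Fin n → X) (c : Fin n → ℝ), 0 ≤ ∑ i, ∑ j, c i * c j * k (xv i) (xv j)

section Posterior

variable {X : Type*} {k : X → X → ℝ}

theorem postStd_nonneg {ι : Type*} [Fintype ι] [DecidableEq ι] (xs : ι → X) (x : X) :
    0 ≤ postStd k xs x :=
  Real.iInf_nonneg fun _ => Real.sqrt_nonneg _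

theorem postStd_le_sqrt_postVar {ι : Type*} [Fintype ι] [DecidableEq ι] (xs : ι → X) (x : X)
    {lam : ℝ} (hlam : 0 < lam) : postStd k xs x ≤ √(postVar k xs lam x) :=
  ciInf_le ⟨0, Set.forall_mem_range.2 fun _ => Real.sqrt_nonneg _⟩ (⟨lam, hlam⟩ : {l : ℝ // 0 < l})

theorem postStd_of_isEmpty {ι : Type*} [Fintype ι] [DecidableEq ι] [IsEmpty ι] (xs : ι → X)
    (x : X) : postStd k xs x = √(k x x) := by
  simp [postStd, postVar]

theorem sInf_range_postStd_le {T : ℕ} (xs : Fin T → X) (t : Fin T) :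
    sInf (Set.range fun s : Fin T => postStd k (pre xs s) (xs s)) ≤ postStd k (pre xs t) (xs t) :=
  csInf_le ⟨0, Set.forall_mem_range.2 fun _ => postStd_nonneg _ _⟩ ⟨t, rfl⟩

theorem gram_add_smul_one_submatrix_finSumFinEquiv (hsym : ∀ x y, k x y = k y x) {n : ℕ}
    (xs : Fin (n + 1) → X) (a : ℝ) :
    (gram k xs + a • 1).submatrix finSumFinEquiv finSumFinEquiv =
      fromBlocks (gram k (Fin.init xs) + a • 1)
        (replicateCol (Fin 1) (kvec k (Fin.init xs) (xs (Fin.last n))))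
        (replicateRow (Fin 1) (kvec k (Fin.init xs) (xs (Fin.last n))))
        !![k (xs (Fin.last n)) (xs (Fin.last n)) + a] := by
  have hcast : ∀ i : Fin n, Fin.castAdd 1 i = i.castSucc := fun _ => rfl
  have hlast : ∀ j : Fin 1, Fin.natAdd n j = Fin.last n := fun j => Fin.ext (by simp)
  ext (i | i) (j | j) <;>
    simp [_root_.gram, kvec, Fin.init, one_apply, hcast, hlast, Fin.castSucc_ne_last,
      (Fin.castSucc_ne_last _).symm, hsym (xs (Fin.last n))]

end Posterior

namespace IsPosSemidefKernel

variable {X : Type*} {k : X → X → ℝ}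

theorem gram_posSemidef (hk : IsPosSemidefKernel k) {n : ℕ} (xs : Fin n → X) :
    (gram k xs).PosSemidef := by
  refine posSemidef_iff_dotProduct_mulVec.2 ⟨?_, fun c => ?_⟩
  · ext i j
    exact hk.1 (xs j) (xs i)
  · have hquad : star c ⬝ᵥ (gram k xs *ᵥ c) = ∑ i, ∑ j, c i * c j * k (xs i) (xs j) := by
      simp only [dotProduct, mulVec, star_trivial, Finset.mul_sum, _root_.gram]
      exact Finset.sum_congr rfl fun i _ => Finset.sum_congr rfl fun j _ => by ring
    exact hquad ▸ hk.2 n xs c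

theorem gram_add_smul_one_posDef (hk : IsPosSemidefKernel k) {n : ℕ} (xs : Fin n → X) {a : ℝ}
    (ha : 0 < a) : (gram k xs + a • 1).PosDef :=
  PosDef.posSemidef_add (hk.gram_posSemidef xs) (PosDef.one.smul ha)

theorem det_gram_add_sq_smul_one_succ (hk : IsPosSemidefKernel k) {n : ℕ} (xs : Fin (n + 1) → X)
    {lam : ℝ} (hlam : 0 < lam) :
    (gram k xs + lam ^ 2 • 1).det =
      (gram k (Fin.init xs) + lam ^ 2 • 1).det *
        (lam ^ 2 + postVar k (Fin.init xs) lam (xs (Fin.last n))) := by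
  have : Invertible (gram k (Fin.init xs) + lam ^ 2 • 1) :=
    (hk.gram_add_smul_one_posDef _ (by positivity)).isUnit.invertible
  rw [← det_submatrix_equiv_self finSumFinEquiv, gram_add_smul_one_submatrix_finSumFinEquiv hk.1,
    det_fromBlocks₁₁, det_fin_one, invOf_eq_nonsing_inv, postVar]
  congr 1
  simp only [replicateRow, replicateCol, Matrix.sub_apply, of_apply, cons_val', cons_val_fin_one,
    mul_apply, Finset.sum_mul, dotProduct, mulVec, Finset.mul_sum]
  rw [Finset.sum_comm]
  simp only [mul_assoc]
  ring

theorem sq_add_postVar_pos (hk : IsPosSemidefKernel k) {n : ℕ} (xs : Fin n → X) {lam : ℝ}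
    (hlam : 0 < lam) (x : X) : 0 < lam ^ 2 + postVar k xs lam x := by
  have h := hk.det_gram_add_sq_smul_one_succ (Fin.snoc xs x) hlam
  rw [Fin.init_snoc, Fin.snoc_last] at h
  have hdet {m : ℕ} (ys : Fin m → X) : 0 < (gram k ys + lam ^ 2 • 1).det :=
    (hk.gram_add_smul_one_posDef ys (by positivity)).det_pos
  exact pos_of_mul_pos_right (h ▸ hdet _) (hdet xs).le

theorem det_gram_add_sq_smul_one_eq_prod (hk : IsPosSemidefKernel k) {T : ℕ} (xs : Fin T → X)
    {lam : ℝ} (hlam : 0 < lam) :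
    (gram k xs + lam ^ 2 • 1).det = ∏ t, (lam ^ 2 + postVar k (pre xs t) lam (xs t)) := by
  induction T with
  | zero => simp
  | succ n ih =>
    rw [hk.det_gram_add_sq_smul_one_succ xs hlam, ih (Fin.init xs), Fin.prod_univ_castSucc]
    rfl

theorem det_one_add_inv_sq_smul_gram_eq_prod (hk : IsPosSemidefKernel k) {T : ℕ}
    (xs : Fin T → X) {lam : ℝ} (hlam : 0 < lam) :
    (1 + (lam ^ 2)⁻¹ • gram k xs).det =
      ∏ t, (1 + (lam ^ 2)⁻¹ * postVar k (pre xs t) lam (xs t)) := by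
  have hscale : 1 + (lam ^ 2)⁻¹ • gram k xs = (lam ^ 2)⁻¹ • (gram k xs + lam ^ 2 • 1) := by
    rw [smul_add, smul_smul, inv_mul_cancel₀ (by positivity), one_smul, add_comm]
  rw [hscale, det_smul, hk.det_gram_add_sq_smul_one_eq_prod xs hlam, Fintype.card_fin,
    ← Fin.prod_const, ← Finset.prod_mul_distrib]
  refine Finset.prod_congr rfl fun t _ => ?_
  field_simp

theorem sInf_range_postStd_le_of_mig_le (hk : IsPosSemidefKernel k) {T : ℕ} (hT : 0 < T)
    (xs : Fin T → X) {lam γ : ℝ} (hlam : 0 < lam) (hγ : 0 ≤ γ)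
    (hmig : mig k T lam ≤ ENNReal.ofReal γ) :
    sInf (Set.range fun t : Fin T => postStd k (pre xs t) (xs t)) ≤
      lam * √(Real.exp (2 * γ / T) - 1) := by
  set f : Fin T → ℝ := fun t => 1 + (lam ^ 2)⁻¹ * postVar k (pre xs t) lam (xs t)
  have hf : ∀ t, 0 < f t := fun t => by
    have h := hk.sq_add_postVar_pos (pre xs t) hlam (xs t)
    calc 0 < (lam ^ 2)⁻¹ * (lam ^ 2 + postVar k (pre xs t) lam (xs t)) := by positivity
      _ = f t := by simp only [f]; field_simp
  have hsum : ∑ t, Real.log (f t) ≤ ∑ _t : Fin T, 2 * γ / T := by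
    have h := (ENNReal.ofReal_le_ofReal_iff hγ).1 ((le_iSup _ xs).trans hmig)
    rw [hk.det_one_add_inv_sq_smul_gram_eq_prod xs hlam,
      Real.log_prod fun t _ => (hf t).ne'] at h
    simp only [Finset.sum_const, Finset.card_univ, Fintype.card_fin, nsmul_eq_mul]
    field_simp
    linarith
  obtain ⟨t, -, ht⟩ := Finset.exists_le_of_sum_le ⟨⟨0, hT⟩, Finset.mem_univ _⟩ hsum
  have hpv : postVar k (pre xs t) lam (xs t) ≤ lam ^ 2 * (Real.exp (2 * γ / T) - 1) := by
    have h := (Real.log_le_iff_le_exp (hf t)).1 ht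
    have : (lam ^ 2)⁻¹ * postVar k (pre xs t) lam (xs t) ≤ Real.exp (2 * γ / T) - 1 := by
      simp only [f] at h
      linarith
    rwa [inv_mul_le_iff₀ (by positivity)] at this
  calc _ ≤ postStd k (pre xs t) (xs t) := sInf_range_postStd_le xs t
    _ ≤ √(postVar k (pre xs t) lam (xs t)) := postStd_le_sqrt_postVar _ _ hlam
    _ ≤ √(lam ^ 2 * (Real.exp (2 * γ / T) - 1)) := Real.sqrt_le_sqrt hpv
    _ = lam * √(Real.exp (2 * γ / T) - 1) := by
      rw [Real.sqrt_mul (sq_nonneg lam), Real.sqrt_sq hlam.le]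

end IsPosSemidefKernel

theorem rpow_neg_one_div_mul_rpow_one_div_pow {a x : ℝ} (ha : 0 < a) (hx : 0 ≤ x) (d : ℕ) :
    (a ^ (-(1 : ℝ) / ((d : ℝ) + 1)) * x ^ ((1 : ℝ) / ((d : ℝ) + 1))) ^ (d + 1) = x / a := by
  have hroot {z : ℝ} (hz : 0 ≤ z) : (z ^ ((1 : ℝ) / ((d : ℝ) + 1))) ^ (d + 1) = z := by
    rw [one_div, ← Nat.cast_add_one, Real.rpow_inv_natCast_pow hz d.succ_ne_zero]
  rw [mul_pow, neg_div, Real.rpow_neg ha.le, inv_pow, hroot ha.le, hroot hx, inv_mul_eq_div]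

theorem sq_sqrt_mul_exp_neg_half {x : ℝ} (hx : 0 ≤ x) (c s : ℝ) :
    (√x * Real.exp (-(1 / 2) * c * s)) ^ 2 = x * Real.exp (-(c * s)) := by
  rw [mul_pow, Real.sq_sqrt hx, ← Real.exp_nat_mul]
  congr 2
  push_cast
  ring

theorem log_div_mul_exp_neg {x : ℝ} (hx : 0 < x) (y : ℝ) :
    Real.log (x / (x * Real.exp (-y))) = y := by
  rw [div_mul_eq_div_div, div_self hx.ne', Real.exp_neg, one_div, inv_inv, Real.log_exp]

theorem exp_one_third_le_two : Real.exp (1 / 3) ≤ 2 := by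
  rw [← Real.le_log_iff_exp_le two_pos]
  linarith [Real.log_two_gt_d9]

theorem min_postStd_se_general
{X : Type*} (k : X → X → ℝ)
    (hsym : ∀ x y : X, k x y = k y x)
    (hpsd : ∀ (n : ℕ) (xv : Fin n → X) (c : Fin n → ℝ),
      0 ≤ ∑ i, ∑ j, c i * c j * k (xv i) (xv j))
    (hk1 : ∀ x : X, k x x ≤ 1)
    (CSE lamBar : ℝ) (hCSE : 0 < CSE) (hlamBar : 0 < lamBar)
    (T0 : ℕ) (d : ℕ)
    (hgain : ∀ lam : ℝ, 0 < lam → lam ≤ lamBar → ∀ t : ℕ, T0 ≤ t →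
      mig k t lam ≤ ENNReal.ofReal (CSE * Real.log ((t : ℝ) / lam ^ 2) ^ (d + 1)))
    (Ctil : ℝ) (hCtil : Ctil = (6 * CSE) ^ (-(1 : ℝ) / ((d : ℝ) + 1)))
    (Tlam : ℕ) (hTlam : ∀ t : ℕ, Tlam ≤ t →
      (t : ℝ) * Real.exp (-(Ctil * (t : ℝ) ^ ((1 : ℝ) / ((d : ℝ) + 1)))) ≤ lamBar ^ 2)
    (TSE : ℕ)
    (hTSE : TSE = max T0 (max Tlam
      (⌈((d : ℝ) + 1) ^ (d + 1) / Ctil ^ (d + 1)⌉₊ + 1))) :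
    (∀ T : ℕ, TSE ≤ T → ∀ xs : Fin T → X,
        sInf (Set.range fun t : Fin T => postStd k (pre xs t) (xs t)) ≤
          Real.sqrt (T : ℝ) *
            Real.exp (-(1 / 2) * Ctil * (T : ℝ) ^ ((1 : ℝ) / ((d : ℝ) + 1)))) ∧
      ∀ T : ℕ, 0 < T → ∀ xs : Fin T → X,
        sInf (Set.range fun t : Fin T => postStd k (pre xs t) (xs t)) ≤ 1 := by
  have hk : IsPosSemidefKernel k := ⟨hsym, hpsd⟩
  refine ⟨fun T hT xs => ?_, fun T hT xs => ?_⟩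
  · obtain rfl | hTpos := Nat.eq_zero_or_pos T
    · simp -- the range is empty and `sInf ∅ = 0`
    set lam := √(T : ℝ) * Real.exp (-(1 / 2) * Ctil * (T : ℝ) ^ ((1 : ℝ) / ((d : ℝ) + 1)))
    have hlam : 0 < lam := by positivity
    have hlam_sq := sq_sqrt_mul_exp_neg_half (Nat.cast_nonneg T) Ctil
      ((T : ℝ) ^ ((1 : ℝ) / ((d : ℝ) + 1)))
    have hlam_le : lam ≤ lamBar := by
      rw [← pow_le_pow_iff_left₀ hlam.le hlamBar.le two_ne_zero, hlam_sq]
      exact hTlam T (((le_max_left _ _).trans (le_max_right _ _)).trans (hTSE ▸ hT))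
    have hgain_T : CSE * Real.log (T / lam ^ 2) ^ (d + 1) = T / 6 := by
      rw [hlam_sq, log_div_mul_exp_neg (by positivity), hCtil,
        rpow_neg_one_div_mul_rpow_one_div_pow (by positivity) (Nat.cast_nonneg T)]
      field_simp
    have hmig := hgain_T ▸ hgain lam hlam hlam_le T ((le_max_left _ _).trans (hTSE ▸ hT))
    calc _ ≤ lam * √(Real.exp (2 * (T / 6) / T) - 1) :=
          hk.sInf_range_postStd_le_of_mig_le hTpos xs hlam (by positivity) hmig
      _ ≤ lam := by
        refine mul_le_of_le_one_right hlam.le (Real.sqrt_le_one.2 ?_)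
        rw [show 2 * ((T : ℝ) / 6) / T = 1 / 3 by field_simp; norm_num]
        linarith [exp_one_third_le_two]
  · calc _ ≤ postStd k (pre xs ⟨0, hT⟩) (xs ⟨0, hT⟩) := sInf_range_postStd_le xs _
      _ = √(k (xs ⟨0, hT⟩) (xs ⟨0, hT⟩)) := postStd_of_isEmpty _ _
      _ ≤ 1 := Real.sqrt_le_one.2 (hk1 _)

/-- Minimum posterior standard deviation under an SE-type information-gain bound. -/
theorem min_postStd_se
{X : Type*} [Nonempty X] (k : X → X → ℝ)
    (hsym : ∀ x y : X, k x y = k y x)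
    (hpsd : ∀ (n : ℕ) (xv : Fin n → X) (c : Fin n → ℝ),
      0 ≤ ∑ i, ∑ j, c i * c j * k (xv i) (xv j))
    (hk1 : ∀ x : X, k x x ≤ 1)
    (CSE lamBar : ℝ) (hCSE : 0 < CSE) (hlamBar : 0 < lamBar)
    (T0 : ℕ) (hT0 : 2 ≤ T0) (d : ℕ) (hd : 1 ≤ d)
    (hgain : ∀ lam : ℝ, 0 < lam → lam ≤ lamBar → ∀ t : ℕ, T0 ≤ t →
      mig k t lam ≤ ENNReal.ofReal (CSE * Real.log ((t : ℝ) / lam ^ 2) ^ (d + 1)))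
    (Ctil : ℝ) (hCtil : Ctil = (6 * CSE) ^ (-(1 : ℝ) / ((d : ℝ) + 1)))
    (Tlam : ℕ) (hTlam : ∀ t : ℕ, Tlam ≤ t →
      (t : ℝ) * Real.exp (-(Ctil * (t : ℝ) ^ ((1 : ℝ) / ((d : ℝ) + 1)))) ≤ lamBar ^ 2)
    (TSE : ℕ)
    (hTSE : TSE = max T0 (max Tlam
      (⌈((d : ℝ) + 1) ^ (d + 1) / Ctil ^ (d + 1)⌉₊ + 1))) :
    (∀ T : ℕ, TSE ≤ T → ∀ xs : Fin T → X,
        sInf (Set.range fun t : Fin T => postStd k (pre xs t) (xs t)) ≤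
          Real.sqrt (T : ℝ) *
            Real.exp (-(1 / 2) * Ctil * (T : ℝ) ^ ((1 : ℝ) / ((d : ℝ) + 1)))) ∧
      ∀ T : ℕ, 0 < T → ∀ xs : Fin T → X,
        sInf (Set.range fun t : Fin T => postStd k (pre xs t) (xs t)) ≤ 1 :=
  min_postStd_se_general k hsym hpsd hk1 CSE lamBar hCSE hlamBar T0 d hgain Ctil hCtil Tlam hTlam
    TSE hTSE
end
end
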